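/- Let q be a prime and ψ an odd Dirichlet character modulo q (ψ(−1) = −1). For positive integers n, m, c with q ∤ m and integer ν ≥ 0, the generalized Kloosterman sum S_ψ(q^{2+ν}·n, m; cq) vanishes when q exactly divides c (i.e. q ‖ c). -/
import Mathlib


/-- `e(x) = e^{2πix}`. -/
noncomputable def e (x : ℝ) : ℂ := Complex.exp (2 * Real.pi * Complex.I * x)

lemma e_add (x y : ℝ) : e (x + y) = e x * e y := by
  simp [e, mul_add, Complex.exp_add]

lemma e_int (k : ℤ) : e k = 1 := by
  rw [e, show 2 * (Real.pi:ℂ) * Complex.I * (k:ℝ) = (k:ℂ) * (2 * Real.pi * Complex.I) by push_cast; ring]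
  exact Complex.exp_int_mul_two_pi_mul_I k

noncomputable def EE (M : ℕ) (z : ZMod M) : ℂ := e ((z.val : ℝ) / M)

lemma EE_intCast (M : ℕ) [NeZero M] (k : ℤ) : EE M ((k : ZMod M)) = e ((k:ℝ)/M) := by
  have h : (M:ℤ) ∣ (k - ((k : ZMod M).val : ℤ)) := by
    rw [← ZMod.intCast_zmod_eq_zero_iff_dvd]
    push_cast
    simp [ZMod.natCast_val, ZMod.cast_id]
  obtain ⟨j, hj⟩ := h
  have hk : (k : ℝ) = (((k : ZMod M).val : ℤ) : ℝ) + (M : ℝ) * j := by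
    have : k = ((k : ZMod M).val : ℤ) + (M : ℤ) * j := by linarith [hj]
    exact_mod_cast congrArg (Int.cast : ℤ → ℝ) this
  have hM : (M : ℝ) ≠ 0 := Nat.cast_ne_zero.mpr (NeZero.ne M)
  rw [EE, hk]
  rw [add_div, mul_div_cancel_left₀ _ hM, e_add, e_int, mul_one]
  norm_num

lemma EE_add (M : ℕ) [NeZero M] (z w : ZMod M) : EE M (z + w) = EE M z * EE M w := by
  have hz : ((z.val : ℤ) : ZMod M) = z := by push_cast; simp [ZMod.natCast_val, ZMod.cast_id]
  have hw : ((w.val : ℤ) : ZMod M) = w := by push_cast; simp [ZMod.natCast_val, ZMod.cast_id]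
  have : z + w = (((z.val + w.val : ℤ)) : ZMod M) := by push_cast [hz, hw]; simp [ZMod.natCast_val, ZMod.cast_id]
  rw [this, EE_intCast]
  push_cast
  rw [add_div, e_add]
  rfl

lemma e_ne_one (M : ℕ) (hM : 2 ≤ M) : e (1 / M) ≠ 1 := by
  intro h
  rw [e, Complex.exp_eq_one_iff] at h
  obtain ⟨k, hk⟩ := h
  have h2 : (2 * (Real.pi:ℂ) * Complex.I) ≠ 0 := by
    simp [Real.pi_ne_zero, Complex.I_ne_zero]
  have : ((1 / M : ℝ) : ℂ) = (k : ℂ) := by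
    have h3 : (2 * (Real.pi:ℂ) * Complex.I) * ((1 / M : ℝ) : ℂ)
        = (2 * (Real.pi:ℂ) * Complex.I) * (k : ℂ) := by rw [hk]; ring
    exact mul_left_cancel₀ h2 h3
  have hr : (1 / M : ℝ) = (k : ℝ) := by exact_mod_cast this
  have hMpos : (0:ℝ) < M := by positivity
  have h1 : (0:ℝ) < 1 / M := by positivity
  have h2' : (1/M : ℝ) < 1 := by
    rw [div_lt_one hMpos]; exact_mod_cast hM.trans_lt' one_lt_two
  rw [hr] at h1 h2'
  have : (0:ℤ) < k := by exact_mod_cast h1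
  have : (k:ℝ) < 1 := h2'
  have : k < 1 := by exact_mod_cast this
  omega

lemma EE_sum (M : ℕ) [NeZero M] (hM : 2 ≤ M) : ∑ s : ZMod M, EE M s = 0 := by
  haveI : Fact (1 < M) := ⟨by omega⟩
  have hshift : ∑ s : ZMod M, EE M ((1:ZMod M) + s) = ∑ s : ZMod M, EE M s :=
    Equiv.sum_comp (Equiv.addLeft (1:ZMod M)) (EE M)
  have hmul : (EE M 1 - 1) * ∑ s : ZMod M, EE M s = 0 := by
    rw [sub_mul, one_mul, Finset.mul_sum, sub_eq_zero]
    simp_rw [← EE_add]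
    exact hshift
  have h1 : EE M 1 = e (1 / M) := by
    rw [EE, ZMod.val_one]
    norm_num
  rcases mul_eq_zero.mp hmul with h | h
  · rw [h1] at h
    exact absurd (sub_eq_zero.mp h) (e_ne_one M hM)
  · exact h

/-- The generalized (twisted) Kloosterman sum
`S_ψ(a,b;c) = ∑_{x mod c, (x,c)=1} ψ(x) e((ax + b x̄)/c)`, where the character `ψ` of
modulus `q` is regarded modulo `c` via the reduction map (requiring `q ∣ c`). -/
noncomputable def genKloosterman (q : ℕ) (ψ : DirichletCharacter ℂ q) (a b : ℤ)
    (c : ℕ) [NeZero c] (hdvd : q ∣ c) : ℂ :=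
  ∑ x : (ZMod c)ˣ,
    ψ (ZMod.castHom hdvd (ZMod q) (x : ZMod c)) *
      e ((((a * ((x : ZMod c).val : ℤ) + b * (((x⁻¹ : (ZMod c)ˣ) : ZMod c).val : ℤ)) : ℤ) : ℝ) / c)

/-- For `q` prime, `ψ` odd mod `q`, `q ∤ m`: the generalized Kloosterman sum
`S_ψ(q^{2+ν}n, m; cq)` vanishes when `q ‖ c`. -/
theorem stmt_9 (q : ℕ) (hq : q.Prime) (ψ : DirichletCharacter ℂ q) (hψ : ψ (-1) = -1)
    (n m c ν : ℕ) [NeZero c] [NeZero q] (hn : 0 < n) (hm : 0 < m)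
    (hqm : ¬ q ∣ m) (hqc : q ∣ c) (hq2c : ¬ q^2 ∣ c) :
    genKloosterman q ψ ((q^(2+ν) * n : ℕ) : ℤ) (m : ℤ) (c*q) (dvd_mul_left q c) = 0 := by
  classical
  haveI : Fact q.Prime := ⟨hq⟩
  set N := c * q with hNdef
  have hqN : q ∣ N := dvd_mul_left q c
  set a : ℤ := ((q^(2+ν) * n : ℕ) : ℤ) with hadef
  set π := ZMod.castHom hqN (ZMod q) with hπdef
  set A : ZMod N := (a : ZMod N) with hA
  set B : ZMod N := ((m:ℤ) : ZMod N) with hB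
  set f : (ZMod N)ˣ → ℂ := fun x =>
    ψ (π (x : ZMod N)) *
      EE N (A * (x : ZMod N) + B * ((x⁻¹ : (ZMod N)ˣ) : ZMod N)) with hf
  -- the sum equals ∑ f
  have hsummand : genKloosterman q ψ a (m:ℤ) N hqN = ∑ x : (ZMod N)ˣ, f x := by
    unfold genKloosterman
    refine Finset.sum_congr rfl fun x _ => ?_
    rw [hf]
    congr 1
    rw [← EE_intCast]
    congr 1
    push_cast
    simp [ZMod.natCast_val, ZMod.cast_id, hA, hB]
  -- basic vanishing facts
  have hcN : ((c : ZMod N)) * ((c : ZMod N)) = 0 := by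
    rw [← Nat.cast_mul, ZMod.natCast_eq_zero_iff]
    exact mul_dvd_mul_left c hqc
  have hac : A * (c : ZMod N) = 0 := by
    rw [hA, ← Int.cast_natCast (R := ZMod N) c, ← Int.cast_mul,
      ZMod.intCast_zmod_eq_zero_iff_dvd]
    exact ⟨(q:ℤ)^(1+ν) * n, by rw [hadef, hNdef]; push_cast; ring⟩
  -- the units 1 + c t
  have hu : ∀ t : ZMod q,
      ((1 : ZMod N) + c * (t.val : ZMod N)) * (1 - c * (t.val : ZMod N)) = 1 := by
    intro t
    have h := hcN
    linear_combination (-((t.val : ZMod N) * (t.val : ZMod N))) * h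
  set u : ZMod q → (ZMod N)ˣ := fun t => Units.mkOfMulEqOne _ _ (hu t) with hudef
  have hu_val : ∀ t, ((u t : (ZMod N)ˣ) : ZMod N) = 1 + c * (t.val : ZMod N) := fun t => rfl
  have hu_inv : ∀ t, (((u t)⁻¹ : (ZMod N)ˣ) : ZMod N) = 1 - c * (t.val : ZMod N) := fun t => rfl
  have hπc : π (c : ZMod N) = 0 := by
    rw [map_natCast, ZMod.natCast_eq_zero_iff]
    exact hqc
  -- key twist identity
  have hfx : ∀ (t : ZMod q) (x : (ZMod N)ˣ),
      f (x * u t) = f x * EE N (-(B * ((x⁻¹ : (ZMod N)ˣ) : ZMod N) * c * (t.val : ZMod N))) := by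
    intro t x
    rw [hf]
    simp only [Units.val_mul, mul_inv_rev, hu_val, hu_inv]
    have h1 : π ((x : ZMod N) * (1 + c * (t.val : ZMod N))) = π (x : ZMod N) := by
      rw [map_mul, map_add, map_one, map_mul, map_natCast,
        (ZMod.natCast_eq_zero_iff c q).mpr hqc]
      ring
    have h2 : A * ((x:ZMod N) * (1 + c * (t.val:ZMod N)))
          + B * ((1 - c*(t.val:ZMod N)) * ((x⁻¹:(ZMod N)ˣ):ZMod N))
        = (A * (x:ZMod N) + B * ((x⁻¹:(ZMod N)ˣ):ZMod N))
          + (-(B * ((x⁻¹:(ZMod N)ˣ):ZMod N) * c * (t.val:ZMod N))) := by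
      linear_combination ((x:ZMod N) * ((t.val : ℕ) : ZMod N)) * hac
    rw [h1, h2, EE_add]
    ring
  have hq2 : 2 ≤ q := hq.two_le
  have hEEc : ∀ w : ZMod N, EE N ((c:ZMod N) * w) = EE q (π w) := by
    intro w
    have hw : ((w.val : ℤ) : ZMod N) = w := by push_cast; simp [ZMod.natCast_val, ZMod.cast_id]
    have h1 : (c:ZMod N) * w = (((c * w.val : ℕ) : ℤ) : ZMod N) := by push_cast [hw]; ring
    have h2 : π w = (((w.val : ℕ) : ℤ) : ZMod q) := by
      rw [hπdef, ZMod.castHom_apply, ← ZMod.natCast_val]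
      push_cast
      ring
    rw [h1, EE_intCast, h2, EE_intCast]
    congr 1
    have hNr : (N:ℝ) = (c:ℝ) * (q:ℝ) := by rw [hNdef]; push_cast; ring
    rw [hNr]
    push_cast
    exact mul_div_mul_left _ _ (Nat.cast_ne_zero.mpr (NeZero.ne c))
  have hinner : ∀ x : (ZMod N)ˣ,
      ∑ t : ZMod q, EE N (-(B * ((x⁻¹:(ZMod N)ˣ):ZMod N) * c * (t.val : ZMod N))) = 0 := by
    intro x
    set r : ZMod q := π (-(B * ((x⁻¹:(ZMod N)ˣ):ZMod N))) with hr
    have hπt : ∀ t : ZMod q, π ((t.val : ZMod N)) = t := by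
      intro t
      rw [map_natCast]
      simp [ZMod.natCast_val, ZMod.cast_id]
    have hrne : r ≠ 0 := by
      have hunit : IsUnit (π ((x⁻¹:(ZMod N)ˣ):ZMod N)) := by
        have : π ((x⁻¹:(ZMod N)ˣ):ZMod N) = ((Units.map π.toMonoidHom x⁻¹ : (ZMod q)ˣ) : ZMod q) := rfl
        rw [this]
        exact (Units.map π.toMonoidHom x⁻¹).isUnit
      have hπB : π B = (m : ZMod q) := by
        rw [hB, map_intCast]
        push_cast
        ring
      rw [hr, map_neg, map_mul, hπB]
      refine neg_ne_zero.mpr (mul_ne_zero ?_ hunit.ne_zero)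
      rw [Ne, ZMod.natCast_eq_zero_iff]
      exact hqm
    calc ∑ t : ZMod q, EE N (-(B * ((x⁻¹:(ZMod N)ˣ):ZMod N) * c * (t.val : ZMod N)))
        = ∑ t : ZMod q, EE q (r * t) := by
          refine Finset.sum_congr rfl fun t _ => ?_
          rw [show -(B * ((x⁻¹:(ZMod N)ˣ):ZMod N) * c * ((t.val:ℕ) : ZMod N))
              = (c:ZMod N) * ((-(B * ((x⁻¹:(ZMod N)ˣ):ZMod N))) * ((t.val:ℕ) : ZMod N)) by ring,
            hEEc, map_mul, hπt, ← hr]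
      _ = ∑ s : ZMod q, EE q s := Equiv.sum_comp (Equiv.mulLeft₀ r hrne) (EE q)
      _ = 0 := EE_sum q hq2
  have hmain : (q:ℂ) * ∑ x : (ZMod N)ˣ, f x = 0 := by
    have h1 : ∑ _t : ZMod q, ∑ x : (ZMod N)ˣ, f x = (q:ℂ) * ∑ x : (ZMod N)ˣ, f x := by
      rw [Finset.sum_const, Finset.card_univ, ZMod.card, nsmul_eq_mul]
    have h2 : ∀ t : ZMod q, ∑ x : (ZMod N)ˣ, f (x * u t) = ∑ x : (ZMod N)ˣ, f x :=
      fun t => Equiv.sum_comp (Equiv.mulRight (u t)) f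
    calc (q:ℂ) * ∑ x : (ZMod N)ˣ, f x
        = ∑ t : ZMod q, ∑ x : (ZMod N)ˣ, f (x * u t) := by
          rw [← h1]
          exact Finset.sum_congr rfl fun t _ => (h2 t).symm
      _ = ∑ t : ZMod q, ∑ x : (ZMod N)ˣ,
            f x * EE N (-(B * ((x⁻¹:(ZMod N)ˣ):ZMod N) * c * (t.val : ZMod N))) :=
          Finset.sum_congr rfl fun t _ => Finset.sum_congr rfl fun x _ => hfx t x
      _ = ∑ x : (ZMod N)ˣ, ∑ t : ZMod q,
            f x * EE N (-(B * ((x⁻¹:(ZMod N)ˣ):ZMod N) * c * (t.val : ZMod N))) :=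
          Finset.sum_comm
      _ = ∑ x : (ZMod N)ˣ, f x * ∑ t : ZMod q,
            EE N (-(B * ((x⁻¹:(ZMod N)ˣ):ZMod N) * c * (t.val : ZMod N))) := by
          simp [Finset.mul_sum]
      _ = 0 := by
          refine Finset.sum_eq_zero fun x _ => ?_
          rw [hinner x, mul_zero]
  have hqne : (q:ℂ) ≠ 0 := Nat.cast_ne_zero.mpr (NeZero.ne q)
  have hS0 : ∑ x : (ZMod N)ˣ, f x = 0 := by
    rcases mul_eq_zero.mp hmain with h | h
    · exact absurd h hqne
    · exact h
  exact hsummand.trans hS0
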